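/- Sequential associativity of insertion on nominal arities: if a ∈ Y and b ∈ Z (with all insertions defined, i.e. a ∈ P_X, b ∈ P_Y), then (Z ∘_b Y) ∘_a X = Z ∘_b (Y ∘_a X). -/
import Mathlib

/-- A nominal arity: a set of ℕ⁺-words pairwise incomparable under the prefix relation. -/
def IsNA (X : Set (List ℕ+)) : Prop := ∀ a ∈ X, ∀ b ∈ X, a <+: b → a = b

/-- `a` is a prefix of the nominal arity `X`: it is an initial segment of every member. -/
def IsPre (a : List ℕ+) (X : Set (List ℕ+)) : Prop := ∀ c ∈ X, a <+: c

/-- Insertion of `X` in `Y` at `a`. -/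
def nins (Y : Set (List ℕ+)) (a : List ℕ+) (X : Set (List ℕ+)) : Set (List ℕ+) :=
  (Y \ {a}) ∪ X

theorem stmt7 (X Y Z : Set (List ℕ+)) (a b : List ℕ+)
    (hX : IsNA X) (hY : IsNA Y) (hZ : IsNA Z)
    (haX : IsPre a X) (haY : a ∈ Y) (hbY : IsPre b Y) (hbZ : b ∈ Z) :
    nins (nins Z b Y) a X = nins Z b (nins Y a X) := by
  have key : ∀ x, x ∈ Z → x ≠ b → x ≠ a := by
    intro x hx hb h
    subst h
    exact hb (hZ b hbZ x hx (hbY x haY)).symm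
  ext x
  simp only [nins, Set.mem_union, Set.mem_diff, Set.mem_singleton_iff]
  have := key x
  tauto
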